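/- Let (Ω, F, (F_n), P) be a filtered atomic probability space with associated collections 𝒜 and ℰ. Let 0 < ε < 1/2 and let k ∈ ℕ with k > −log₂(ε). Let A ∈ 𝒜 satisfy P((G_k(ℰ, A))*) > (1 − ε/2) P(A). Then there exists a function H_A : Ω → ℝ such that: (H1) |H_A| ≤ 1 almost everywhere; (H2) supp H_A ⊆ A; (H3) there exists t ∈ ℕ such that H_A is F_t-measurable; (H4) ∫_A H_A dP = 0; (H5) P({|H_A| ≠ 1} ∩ A) ≤ ε P(A); (H6) (1/2 − ε) P(A) ≤ P({H_A = ξ}) ≤ (1/2) P(A) for each ξ ∈ {−1, 1}; (H7) ∑_{n≥1} ‖E[H_A|F_n] − E[H_A|F_{n−1}]‖_{L¹(Ω)} ≤ 6 P(A). -/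

import Mathlib

open MeasureTheory ENNReal

noncomputable section

namespace Paper

/-- A filtered atomic probability space structure on `(Ω, m0, P)`:
an increasing sequence of finite measurable partitions `part n` of `Ω` into atoms of
positive measure (with `part 0 = {univ}`, so that the `0`-th σ-algebra is trivial),
generating the ambient σ-algebra, together with a choice `star n A` of a child of
maximal measure for every atom `A` of `part n`. -/
structure FilteredAtomic (Ω : Type*) [m0 : MeasurableSpace Ω] (P : Measure Ω) where
  part : ℕ → Finset (Set Ω)
  part_zero : part 0 = {Set.univ}
  meas : ∀ n, ∀ A ∈ part n, MeasurableSet A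
  pos : ∀ n, ∀ A ∈ part n, 0 < P A
  disj : ∀ n, (part n : Set (Set Ω)).PairwiseDisjoint id
  cover : ∀ n, ⋃₀ (part n : Set (Set Ω)) = Set.univ
  refined : ∀ n, ∀ A ∈ part (n + 1), ∃ B ∈ part n, A ⊆ B
  gen : m0 = ⨆ n, MeasurableSpace.generateFrom (part n : Set (Set Ω))
  star : ℕ → Set Ω → Set Ω
  star_mem : ∀ n, ∀ A ∈ part n, star n A ∈ part (n + 1)
  star_sub : ∀ n, ∀ A ∈ part n, star n A ⊆ A
  star_max : ∀ n, ∀ A ∈ part n, ∀ B ∈ part (n + 1), B ⊆ A → P B ≤ P (star n A)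

variable {Ω : Type*} [m0 : MeasurableSpace Ω] {P : Measure Ω}

/-- The filtration `F_n` generated by the atoms of the `n`-th partition
(`F_0` is the trivial σ-algebra since `part 0 = {univ}`). -/
def FilteredAtomic.filt (F : FilteredAtomic Ω P) (n : ℕ) : MeasurableSpace Ω :=
  MeasurableSpace.generateFrom (F.part n : Set (Set Ω))

/-- The collection 𝒜 of all atoms. -/
def FilteredAtomic.atoms (F : FilteredAtomic Ω P) : Set (Set Ω) :=
  ⋃ n, (F.part n : Set (Set Ω))

/-- The collection 𝒞 = {star A : A ∈ 𝒜}. -/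
def FilteredAtomic.starSets (F : FilteredAtomic Ω P) : Set (Set Ω) :=
  {B | ∃ n, ∃ A ∈ F.part n, B = F.star n A}

/-- The collection ℰ = 𝒜 \ 𝒞. -/
def FilteredAtomic.eColl (F : FilteredAtomic Ω P) : Set (Set Ω) :=
  F.atoms \ F.starSets

/-- The collection ℬ = {Ã : A ∈ 𝒜, P(Ã) > 0}, where Ã = A \ star A. -/
def FilteredAtomic.bColl (F : FilteredAtomic Ω P) : Set (Set Ω) :=
  {S | (∃ n, ∃ A ∈ F.part n, S = A \ F.star n A) ∧ 0 < P S}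

/-- The Carleson constant [[R]] of a collection of sets. -/
def carleson (P : Measure Ω) (R : Set (Set Ω)) : ℝ≥0∞ :=
  ⨆ I ∈ R, (P I)⁻¹ * ∑' J : {J : Set Ω // J ∈ R ∧ J ⊆ I}, P (J : Set Ω)

/-- A collection is nested if any two members are disjoint or comparable. -/
def Nested (R : Set (Set Ω)) : Prop :=
  ∀ A ∈ R, ∀ B ∈ R, (A ∩ B).Nonempty → A ⊆ B ∨ B ⊆ A

/-- `G1 R A`: the maximal members of `R` strictly contained in `A`. -/
def G1 (R : Set (Set Ω)) (A : Set Ω) : Set (Set Ω) :=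
  {B | B ∈ R ∧ B ⊂ A ∧ ∀ C ∈ R, C ⊂ A → B ⊆ C → B = C}

/-- `Gk R k A`: the `k`-th generation of `R` inside `A`. -/
def Gk (R : Set (Set Ω)) : ℕ → Set Ω → Set (Set Ω)
  | 0, A => {A}
  | k + 1, A => ⋃ J ∈ Gk R k A, G1 R J

/-- Martingale difference `E[f|F_{n+1}] - E[f|F_n]`; with the present indexing this is the
paper's `Δ_{n+1} f`, so `fun n => F.mdiff f n` enumerates `Δ_1 f, Δ_2 f, …`. -/
def FilteredAtomic.mdiff (F : FilteredAtomic Ω P) {X : Type*} [NormedAddCommGroup X]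
    [NormedSpace ℝ X] [CompleteSpace X] (f : Ω → X) (n : ℕ) : Ω → X :=
  P[f|F.filt (n + 1)] - P[f|F.filt n]

/-- `(‖E f‖^p + ∑_{n ≥ 1} ‖E[f|F_n] - E[f|F_{n-1}]‖_{L^p}^p)^{1/p}` as an `ℝ≥0∞` number. -/
def FilteredAtomic.mtBound (F : FilteredAtomic Ω P) {X : Type*} [NormedAddCommGroup X]
    [NormedSpace ℝ X] [CompleteSpace X] (f : Ω → X) (p : ℝ) : ℝ≥0∞ :=
  ((‖∫ ω, f ω ∂P‖₊ : ℝ≥0∞) ^ p +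
    ∑' n : ℕ, eLpNorm (F.mdiff f n) (ENNReal.ofReal p) P ^ p) ^ (1 / p)

/-- `M` is a scalar martingale type `p` constant for the filtered space. -/
def ScalarMT (F : FilteredAtomic Ω P) (p M : ℝ) : Prop :=
  1 ≤ M ∧ ∀ g : Ω → ℝ, MemLp g (ENNReal.ofReal p) P →
    eLpNorm g (ENNReal.ofReal p) P ≤ ENNReal.ofReal M * F.mtBound g p

/-- The dyadic interval `[k/2^n, (k+1)/2^n) ⊆ [0,1)` (for `k < 2^n`). -/
def dyadic (n k : ℕ) : Set ℝ := Set.Ico ((k : ℝ) / 2 ^ n) (((k : ℝ) + 1) / 2 ^ n)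

/-- The Haar function `h_I = 1_{I⁺} - 1_{I⁻}` of the dyadic interval `I = [k/2^n, (k+1)/2^n)`. -/
def haarFn (n k : ℕ) : ℝ → ℝ :=
  (dyadic (n + 1) (2 * k)).indicator 1 - (dyadic (n + 1) (2 * k + 1)).indicator 1

/-- `X` has Haar type `p` with constant `C`: for every finitely supported family of vectors
indexed by dyadic subintervals of `[0,1)` (encoded as pairs `(n,k)` with `k < 2^n`),
`‖∑ x_I h_I‖_{L^p([0,1);X)} ≤ C (∑ ‖x_I‖^p |I|)^{1/p}`. -/
def HaarTypeWith (X : Type*) [NormedAddCommGroup X] [NormedSpace ℝ X] (p C : ℝ) : Prop :=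
  ∀ s : Finset (ℕ × ℕ), (∀ q ∈ s, q.2 < 2 ^ q.1) → ∀ x : ℕ × ℕ → X,
    (∫ t in Set.Ico (0 : ℝ) 1, ‖∑ q ∈ s, haarFn q.1 q.2 t • x q‖ ^ p) ^ (1 / p) ≤
      C * (∑ q ∈ s, ‖x q‖ ^ p * ((2 : ℝ) ^ q.1)⁻¹) ^ (1 / p)

/-- The order `≺` on atoms: earlier generation first, and within a generation larger
measure first. -/
def Prec (F : FilteredAtomic Ω P) (B₁ B₂ : Set Ω) : Prop :=
  ∃ l m : ℕ, B₁ ∈ F.part l ∧ B₂ ∈ F.part m ∧ (l < m ∨ (l = m ∧ P B₂ < P B₁))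

/-- `U_j = {B ∈ G_1(ℰ, Y_{j-1}) : B ≺ Y_j}`. -/
def Uset (F : FilteredAtomic Ω P) (Y : ℕ → Set Ω) (j : ℕ) : Set (Set Ω) :=
  {B | B ∈ G1 F.eColl (Y (j - 1)) ∧ Prec F B (Y j)}

/-- The sequence `Y` satisfies condition `D_m(A)`. -/
def CondD (F : FilteredAtomic Ω P) (A : Set Ω) (Y : ℕ → Set Ω) (m : ℕ) : Prop :=
  Y 0 = A ∧ (∀ j ∈ Finset.Icc 1 m, Y j ∈ G1 F.eColl (Y (j - 1))) ∧
    ∑ j ∈ Finset.Icc 1 m, P (⋃₀ Uset F Y j) ≤ 2⁻¹ * P A ∧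
    2⁻¹ * P A ≤ P (Y m) + ∑ j ∈ Finset.Icc 1 m, P (⋃₀ Uset F Y j)

/-- The collection ℰ supports all initial segments of a generalized Haar system with
constant `K`.  Dyadic intervals in `𝒟_n` are encoded as pairs `(j,k)`, `j ≤ n`, `k < 2^j`,
corresponding to `[k/2^j, (k+1)/2^j)`; `ε = δ·2^{-n-1}`. -/
def SupportsHaar (F : FilteredAtomic Ω P) (K : ℝ) : Prop :=
  0 < K ∧ ∀ (n : ℕ) (δ : ℝ), 0 < δ →
    ∃ (C : ℕ × ℕ → Set (Set Ω)) (g : ℕ × ℕ → Ω → ℝ) (A0 : Set Ω) (S : ℕ),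
      A0 ∈ F.eColl ∧
      -- (A1)
      C (0, 0) = {A0} ∧
      -- (A2)
      (∀ j k, j ≤ n → k < 2 ^ j → C (j, k) ⊆ {A | A ∈ F.eColl ∧ A ⊆ A0}) ∧
      -- (A3)
      (∀ j k, j ≤ n → k < 2 ^ j → (C (j, k)).PairwiseDisjoint id) ∧
      -- (A4)
      (∀ j k l i, j ≤ n → k < 2 ^ j → l ≤ n → i < 2 ^ l →
        ((⋃₀ C (j, k) ⊆ ⋃₀ C (l, i) ↔ dyadic j k ⊆ dyadic l i) ∧
          ((⋃₀ C (j, k) ∩ ⋃₀ C (l, i)).Nonempty ↔ (dyadic j k ∩ dyadic l i).Nonempty))) ∧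
      -- (A5)
      (∀ j k, j + 1 ≤ n → k < 2 ^ j →
        (∀ ω, g (j, k) ω ∈ Set.Icc (-1 : ℝ) 1) ∧
        Function.support (g (j, k)) ⊆ ⋃₀ C (j, k) ∧
        ⋃₀ C (j + 1, 2 * k) ⊆ {ω | g (j, k) ω = 1} ∧
        ⋃₀ C (j + 1, 2 * k + 1) ⊆ {ω | g (j, k) ω = -1}) ∧
      -- (A6)
      (∀ j k, j ≤ n → k < 2 ^ j → ∀ A ∈ C (j, k), MeasurableSet[F.filt S] A) ∧
      -- (A7)
      (∀ j k, j + 1 ≤ n → k < 2 ^ j → Measurable[F.filt S] (g (j, k))) ∧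
      -- (A8)
      (∀ A ∈ F.part S, ∀ m, 1 ≤ m → m ≤ S →
        ∀ j k j' k', j + 1 ≤ n → k < 2 ^ j → j' + 1 ≤ n → k' < 2 ^ j' →
          ¬ F.mdiff (g (j, k)) (m - 1) =ᵐ[P.restrict A] (0 : Ω → ℝ) →
          ¬ F.mdiff (g (j', k')) (m - 1) =ᵐ[P.restrict A] (0 : Ω → ℝ) →
          (j, k) = (j', k')) ∧
      -- (A9)
      (∀ j k, j + 1 ≤ n → k < 2 ^ j →
        ∑' i : ℕ, eLpNorm (F.mdiff (g (j, k)) i) 1 P ≤ ENNReal.ofReal K * P (⋃₀ C (j, k))) ∧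
      -- (A10)
      (∀ j k, j ≤ n → k < 2 ^ j →
        ENNReal.ofReal (((2 : ℝ) ^ j)⁻¹ - 2 * (δ * ((2 : ℝ) ^ (n + 1))⁻¹)) * P A0 ≤
            P (⋃₀ C (j, k)) ∧
          P (⋃₀ C (j, k)) ≤ ENNReal.ofReal (((2 : ℝ) ^ j)⁻¹) * P A0)

end Paper

/-!
Let `A` be an atom of level `ℓ`. Walk down a chain of atoms `A = D₀ ⊇ D₁ ⊇ ⋯`, `Dₙ` of level
`ℓ + n`, and collect whole siblings of the `Dᵢ` into a set `Sₙ`, greedily, so that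
`P(Sₙ) ≤ P(A)/2 ≤ P(Sₙ) + P(Dₙ)` at every step. Take `H = 1` on `Sₙ`, `H = -1` on the rest of
`A \ Dₙ`, and on `Dₙ` the constant in `[-1, 1]` that gives `H` mean zero.

The chain must eventually have `P(Dₙ) < ε P(A)`. Otherwise `⋂ₙ Dₙ` has measure at least
`ε P(A)` and misses every member of `G_k(ℰ, A)`: such a member is an atom of measure at most
`2⁻ᵏ P(A) < ε P(A)` (a non-star child has at most half the measure of its parent), whereas an
atom meeting `⋂ₙ Dₙ` contains one of the `Dₙ`. As both sets lie in `A`, this contradicts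
`P(G_k(ℰ, A)*) > (1 - ε/2) P(A)`.

For the martingale differences: below level `ℓ` they vanish because `H` has mean zero on `A`,
and from level `ℓ + n` on because `H` is `F_{ℓ+n}`-measurable. At level `ℓ + i`, `H` is
constant on every atom other than `Dᵢ`, so the difference is supported on `Dᵢ`, has mean zero
there and is constant on `Dᵢ₊₁`. Its `L¹` norm is therefore at most twice its mass on
`Dᵢ \ Dᵢ₊₁`, that is at most `4 P(Dᵢ \ Dᵢ₊₁)`, and these bounds telescope to `4 P(A)`.
-/

namespace Paper.FilteredAtomic

variable {Ω : Type*} [m0 : MeasurableSpace Ω] {P : Measure Ω} (F : FilteredAtomic Ω P)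

theorem filt_le (n : ℕ) : F.filt n ≤ m0 :=
  MeasurableSpace.generateFrom_le fun s hs => F.meas n s hs

theorem exists_mem_part (n : ℕ) (x : Ω) : ∃ B ∈ F.part n, x ∈ B := by
  simpa using (F.cover n).ge (Set.mem_univ x)

variable {F}

theorem disjoint_of_mem_part {n : ℕ} {B C : Set Ω} (hB : B ∈ F.part n) (hC : C ∈ F.part n)
    (hBC : B ≠ C) : Disjoint B C :=
  F.disj n hB hC hBC

theorem eq_of_mem_part {n : ℕ} {B C : Set Ω} (hB : B ∈ F.part n) (hC : C ∈ F.part n) {x : Ω}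
    (hxB : x ∈ B) (hxC : x ∈ C) : B = C := by
  by_contra hBC
  exact Set.disjoint_left.1 (disjoint_of_mem_part hB hC hBC) hxB hxC

theorem exists_superset_of_le {m n : ℕ} (h : m ≤ n) {C : Set Ω} (hC : C ∈ F.part n) :
    ∃ B ∈ F.part m, C ⊆ B := by
  induction n, h using Nat.le_induction generalizing C with
  | base => exact ⟨C, hC, subset_rfl⟩
  | succ n _ ih =>
    obtain ⟨B, hB, hCB⟩ := F.refined n C hC
    obtain ⟨B', hB', hBB'⟩ := ih hB
    exact ⟨B', hB', hCB.trans hBB'⟩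

theorem subset_of_le {m n : ℕ} (h : m ≤ n) {B C : Set Ω} (hB : B ∈ F.part m)
    (hC : C ∈ F.part n) {x : Ω} (hxB : x ∈ B) (hxC : x ∈ C) : C ⊆ B := by
  obtain ⟨B', hB', hCB'⟩ := exists_superset_of_le h hC
  rwa [eq_of_mem_part hB hB' hxB (hCB' hxC)]

theorem nonempty_of_mem_part {n : ℕ} {B : Set Ω} (hB : B ∈ F.part n) : B.Nonempty :=
  Set.nonempty_iff_ne_empty.2 fun h => by simpa [h] using F.pos n B hB

theorem lt_of_ssubset {m n : ℕ} {B C : Set Ω} (hB : B ∈ F.part m) (hC : C ∈ F.part n)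
    (hCB : C ⊂ B) : m < n := by
  by_contra! h
  obtain ⟨x, hx⟩ := nonempty_of_mem_part hC
  exact hCB.2 (subset_of_le h hC hB hx (hCB.1 hx))

theorem subset_or_disjoint_of_measurableSet {n : ℕ} {s : Set Ω} (hs : MeasurableSet[F.filt n] s)
    {C : Set Ω} (hC : C ∈ F.part n) : C ⊆ s ∨ Disjoint C s := by
  induction s, hs using MeasurableSpace.generateFrom_induction with
  | hC t ht =>
    by_cases hCt : C = t
    · exact .inl hCt.le
    · exact .inr (disjoint_of_mem_part hC ht hCt)
  | empty => exact .inr (Set.disjoint_empty C)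
  | compl t _ ih =>
    rcases ih with h | h
    · exact .inr (Set.disjoint_compl_right_iff_subset.2 h)
    · exact .inl (Set.subset_compl_iff_disjoint_right.2 h)
  | iUnion t _ ih =>
    by_cases hsub : ∃ i, C ⊆ t i
    · obtain ⟨i, hi⟩ := hsub
      exact .inl (hi.trans (Set.subset_iUnion t i))
    · push Not at hsub
      exact .inr (Set.disjoint_iUnion_right.2 fun i => (ih i).resolve_left (hsub i))

open Classical in
theorem biUnion_filter_subset_eq {n : ℕ} {s : Set Ω} (hs : ∀ C ∈ F.part n, C ⊆ s ∨ Disjoint C s) :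
    ⋃ C ∈ (F.part n).filter (· ⊆ s), C = s := by
  refine subset_antisymm (Set.iUnion₂_subset fun C hC => (Finset.mem_filter.1 hC).2) ?_
  intro x hx
  obtain ⟨C, hC, hxC⟩ := F.exists_mem_part n x
  have hCs : C ⊆ s := (hs C hC).resolve_right (Set.not_disjoint_iff.2 ⟨x, hxC, hx⟩)
  exact Set.mem_biUnion (Finset.mem_filter.2 ⟨hC, hCs⟩) hxC

theorem subset_or_disjoint_of_le {m n : ℕ} (h : m ≤ n) {B C : Set Ω} (hB : B ∈ F.part m)
    (hC : C ∈ F.part n) : C ⊆ B ∨ Disjoint C B := by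
  by_cases hCB : Disjoint C B
  · exact .inr hCB
  · obtain ⟨x, hxC, hxB⟩ := Set.not_disjoint_iff.1 hCB
    exact .inl (subset_of_le h hB hC hxB hxC)

theorem measurableSet_filt_of_le {m n : ℕ} (h : m ≤ n) {B : Set Ω} (hB : B ∈ F.part m) :
    MeasurableSet[F.filt n] B := by
  classical
  rw [← biUnion_filter_subset_eq fun C hC => subset_or_disjoint_of_le h hB hC]
  exact Finset.measurableSet_biUnion _ fun C hC =>
    MeasurableSpace.measurableSet_generateFrom (Finset.mem_filter.1 hC).1

theorem filt_mono : Monotone F.filt := fun _ _ h =>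
  MeasurableSpace.generateFrom_le fun _ hB => measurableSet_filt_of_le h hB

variable (F) in
def atomAvg (n : ℕ) (f : Ω → ℝ) : Ω → ℝ :=
  fun ω => ∑ C ∈ F.part n, C.indicator (fun _ => ⨍ x in C, f x ∂P) ω

variable {n : ℕ} {f : Ω → ℝ}

theorem atomAvg_apply {C : Set Ω} (hC : C ∈ F.part n) {ω : Ω} (hω : ω ∈ C) :
    F.atomAvg n f ω = ⨍ x in C, f x ∂P := by
  rw [atomAvg, Finset.sum_eq_single C (fun D hD hDC => ?_) (absurd hC), Set.indicator_of_mem hω]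
  exact Set.indicator_of_notMem (fun hωD => hDC (eq_of_mem_part hD hC hωD hω)) _

theorem measurable_atomAvg : Measurable[F.filt n] (F.atomAvg n f) :=
  Finset.measurable_fun_sum _ fun _ hC =>
    measurable_const.indicator (MeasurableSpace.measurableSet_generateFrom hC)

theorem atomAvg_eq_zero_of_le {ℓ m : ℕ} (hm : m ≤ ℓ) {A : Set Ω} (hA : A ∈ F.part ℓ)
    (hfA : ∀ x ∉ A, f x = 0) (hf0 : ∫ x, f x ∂P = 0) (ω : Ω) : F.atomAvg m f ω = 0 := by
  obtain ⟨C, hC, hω⟩ := F.exists_mem_part m ω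
  suffices ∫ x in C, f x ∂P = 0 by rw [atomAvg_apply hC hω, setAverage_eq, this, smul_zero]
  rcases subset_or_disjoint_of_le hm hC hA with hAC | hAC
  · rw [setIntegral_eq_integral_of_forall_compl_eq_zero fun x hx => hfA x fun h => hx (hAC h),
      hf0]
  · exact setIntegral_eq_zero_of_forall_eq_zero fun x hx => hfA x (Set.disjoint_right.1 hAC hx)

variable [IsFiniteMeasure P]

theorem setIntegral_atomAvg_of_mem {C : Set Ω} (hC : C ∈ F.part n) :
    ∫ x in C, F.atomAvg n f x ∂P = ∫ x in C, f x ∂P := by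
  rw [setIntegral_congr_fun (F.meas n C hC) fun ω hω => atomAvg_apply hC hω, setIntegral_const,
    measure_smul_setAverage _ (measure_ne_top P C)]

theorem atomAvg_eq_of_forall_eq {C : Set Ω} (hC : C ∈ F.part n) {v : ℝ} (hf : ∀ x ∈ C, f x = v)
    {ω : Ω} (hω : ω ∈ C) : F.atomAvg n f ω = v := by
  rw [atomAvg_apply hC hω, setAverage_congr_fun (F.meas n C hC) (ae_of_all _ hf),
    setAverage_const (F.pos n C hC).ne' (measure_ne_top P C)]

theorem abs_atomAvg_le {M : ℝ} (hf : ∀ x, |f x| ≤ M) (ω : Ω) : |F.atomAvg n f ω| ≤ M := by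
  obtain ⟨C, hC, hω⟩ := F.exists_mem_part n ω
  have hpos : 0 < P.real C := ENNReal.toReal_pos (F.pos n C hC).ne' (measure_ne_top P C)
  have hint : ‖∫ x in C, f x ∂P‖ ≤ M * P.real C :=
    norm_setIntegral_le_of_norm_le_const (measure_lt_top P C) fun x _ => hf x
  rw [atomAvg_apply hC hω, setAverage_eq, smul_eq_mul, abs_mul, abs_inv, abs_of_pos hpos]
  calc (P.real C)⁻¹ * ‖∫ x in C, f x ∂P‖ ≤ (P.real C)⁻¹ * (M * P.real C) := by gcongr
    _ = M := by field_simp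

theorem integrable_atomAvg : Integrable (F.atomAvg n f) P :=
  integrable_finsetSum _ fun C hC => (integrable_const _).indicator (F.meas n C hC)

theorem setIntegral_atomAvg (hf : Integrable f P) {s : Set Ω} (hs : MeasurableSet[F.filt n] s) :
    ∫ x in s, F.atomAvg n f x ∂P = ∫ x in s, f x ∂P := by
  classical
  have hmeas : ∀ C ∈ (F.part n).filter (· ⊆ s), MeasurableSet C := fun C hC =>
    F.meas n C (Finset.mem_filter.1 hC).1
  have hdisj : (↑((F.part n).filter (· ⊆ s)) : Set (Set Ω)).PairwiseDisjoint id :=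
    (F.disj n).subset (Finset.coe_subset.2 (Finset.filter_subset _ _))
  rw [← biUnion_filter_subset_eq fun C hC => subset_or_disjoint_of_measurableSet hs hC,
    integral_biUnion_finset _ hmeas hdisj fun _ _ => integrable_atomAvg.integrableOn,
    integral_biUnion_finset _ hmeas hdisj fun _ _ => hf.integrableOn]
  exact Finset.sum_congr rfl fun C hC => setIntegral_atomAvg_of_mem (Finset.mem_filter.1 hC).1

theorem condExp_ae_eq_atomAvg (hf : Integrable f P) : P[f|F.filt n] =ᵐ[P] F.atomAvg n f := by
  have := isFiniteMeasure_trim (μ := P) (F.filt_le n)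
  exact (ae_eq_condExp_of_forall_setIntegral_eq (F.filt_le n) hf
    (fun _ _ _ => integrable_atomAvg.integrableOn) (fun _ hs _ => setIntegral_atomAvg hf hs)
    measurable_atomAvg.stronglyMeasurable.aestronglyMeasurable).symm

end Paper.FilteredAtomic

namespace Paper

variable {Ω : Type*} {R : Set (Set Ω)} {A B : Set Ω}

theorem mem_Gk_succ {j : ℕ} : B ∈ Gk R (j + 1) A ↔ ∃ J ∈ Gk R j A, B ∈ G1 R J := by
  simp [Gk]

theorem Gk_subset_insert (j : ℕ) : Gk R j A ⊆ insert A R := by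
  cases j with
  | zero => simp [Gk]
  | succ j =>
    intro B hB
    obtain ⟨J, -, hBJ⟩ := mem_Gk_succ.1 hB
    exact .inr hBJ.1

theorem subset_of_mem_Gk {j : ℕ} (hB : B ∈ Gk R j A) : B ⊆ A := by
  induction j generalizing B with
  | zero => exact (Set.mem_singleton_iff.1 hB).le
  | succ j ih =>
    obtain ⟨J, hJ, hBJ⟩ := mem_Gk_succ.1 hB
    exact hBJ.2.1.1.trans (ih hJ)

namespace FilteredAtomic

variable [MeasurableSpace Ω] {P : Measure Ω} [IsFiniteMeasure P] {F : FilteredAtomic Ω P}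

theorem two_mul_measureReal_le_of_mem_G1 {Y : Set Ω} (hY : Y ∈ F.atoms)
    (hB : B ∈ G1 F.eColl Y) : 2 * P.real B ≤ P.real Y := by
  obtain ⟨⟨hBatom, hBstar⟩, hBY, -⟩ := hB
  obtain ⟨l, hYl⟩ := Set.mem_iUnion.1 hY
  obtain ⟨m, hBm⟩ := Set.mem_iUnion.1 hBatom
  have hlm := lt_of_ssubset hYl hBm hBY
  obtain ⟨m, rfl⟩ : ∃ m', m = m' + 1 := ⟨m - 1, by omega⟩
  obtain ⟨Q, hQ, hBQ⟩ := F.refined m B hBm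
  obtain ⟨x, hx⟩ := nonempty_of_mem_part hBm
  have hQY : Q ⊆ Y := subset_of_le (by omega) hYl hQ (hBY.1 hx) (hBQ hx)
  have hstar : Disjoint B (F.star m Q) :=
    disjoint_of_mem_part hBm (F.star_mem m Q hQ) fun h => hBstar ⟨m, Q, hQ, h⟩
  have hmax : P.real B ≤ P.real (F.star m Q) :=
    ENNReal.toReal_mono (measure_ne_top P _) (F.star_max m Q hQ B hBm hBQ)
  calc 2 * P.real B ≤ P.real B + P.real (F.star m Q) := by linarith
    _ = P.real (B ∪ F.star m Q) := (measureReal_union hstar (F.meas _ _ (F.star_mem m Q hQ))).symm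
    _ ≤ P.real Y :=
        measureReal_mono (Set.union_subset (hBQ.trans hQY) ((F.star_sub m Q hQ).trans hQY))

theorem two_pow_mul_measureReal_le_of_mem_Gk (hA : A ∈ F.atoms) {j : ℕ}
    (hB : B ∈ Gk F.eColl j A) : 2 ^ j * P.real B ≤ P.real A := by
  induction j generalizing B with
  | zero => simp [(Set.mem_singleton_iff.1 hB)]
  | succ j ih =>
    obtain ⟨J, hJ, hBJ⟩ := mem_Gk_succ.1 hB
    have hJatom : J ∈ F.atoms := by
      rcases Gk_subset_insert j hJ with rfl | hJe
      exacts [hA, hJe.1]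
    calc 2 ^ (j + 1) * P.real B = 2 ^ j * (2 * P.real B) := by ring
      _ ≤ 2 ^ j * P.real J := by gcongr; exact two_mul_measureReal_le_of_mem_G1 hJatom hBJ
      _ ≤ P.real A := ih hJ

end FilteredAtomic

end Paper

theorem MeasureTheory.integral_norm_le_of_setIntegral_eq_zero {α E : Type*} [MeasurableSpace α]
    {μ : Measure α} [IsFiniteMeasure μ] [NormedAddCommGroup E] [NormedSpace ℝ E] [CompleteSpace E]
    {g : α → E} (hg : Integrable g μ) {D D' : Set α} (hD' : MeasurableSet D') (hD'D : D' ⊆ D)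
    (hzero : ∀ x ∉ D, g x = 0) {c : E} (hconst : ∀ x ∈ D', g x = c)
    (hint : ∫ x in D, g x ∂μ = 0) {M : ℝ} (hM : ∀ x, ‖g x‖ ≤ M) :
    ∫ x, ‖g x‖ ∂μ ≤ 2 * M * μ.real (D \ D') := by
  have hsplit : ∫ x, ‖g x‖ ∂μ = ∫ x in D \ D', ‖g x‖ ∂μ + ∫ x in D', ‖g x‖ ∂μ := by
    rw [← setIntegral_union Set.disjoint_sdiff_left hD' hg.norm.integrableOn
      hg.norm.integrableOn, Set.sdiff_union_of_subset hD'D,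
      setIntegral_eq_integral_of_forall_compl_eq_zero fun x hx => by simp [hzero x hx]]
  have hD'norm : ∫ x in D', ‖g x‖ ∂μ = ‖∫ x in D', g x ∂μ‖ := by
    rw [setIntegral_congr_fun hD' fun x hx => congrArg norm (hconst x hx),
      setIntegral_congr_fun hD' hconst, setIntegral_const, setIntegral_const, norm_smul,
      smul_eq_mul, Real.norm_of_nonneg measureReal_nonneg]
  have hbalance : ∫ x in D', g x ∂μ = -∫ x in D \ D', g x ∂μ := by
    rw [setIntegral_sdiff hD' hg.integrableOn hD'D, hint, zero_sub, neg_neg]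
  have hdiff : ∫ x in D \ D', ‖g x‖ ∂μ ≤ M * μ.real (D \ D') :=
    (Real.le_norm_self _).trans (norm_setIntegral_le_of_norm_le_const (f := fun x => ‖g x‖)
      (measure_lt_top μ _) fun x _ => by simpa using hM x)
  calc ∫ x, ‖g x‖ ∂μ = ∫ x in D \ D', ‖g x‖ ∂μ + ‖∫ x in D \ D', g x ∂μ‖ := by
        rw [hsplit, hD'norm, hbalance, norm_neg]
    _ ≤ ∫ x in D \ D', ‖g x‖ ∂μ + ∫ x in D \ D', ‖g x‖ ∂μ := by
        gcongr
        exact norm_integral_le_integral_norm _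
    _ ≤ 2 * M * μ.real (D \ D') := by linarith

namespace Paper.FilteredAtomic

variable {Ω : Type*} [MeasurableSpace Ω] {P : Measure Ω} [IsFiniteMeasure P]
  {F : FilteredAtomic Ω P} {f : Ω → ℝ}

theorem eLpNorm_mdiff_le {m : ℕ} {D D' : Set Ω} (hD : D ∈ F.part m) (hD' : D' ∈ F.part (m + 1))
    (hD'D : D' ⊆ D) (hf : Integrable f P) (hf1 : ∀ x, |f x| ≤ 1)
    (hconst : ∀ C ∈ F.part m, C ≠ D → ∃ v, ∀ x ∈ C, f x = v) :
    eLpNorm (F.mdiff f m) 1 P ≤ ENNReal.ofReal (4 * P.real (D \ D')) := by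
  set g := F.atomAvg (m + 1) f - F.atomAvg m f
  have hgint : Integrable g P := integrable_atomAvg.sub integrable_atomAvg
  have hzero : ∀ x ∉ D, g x = 0 := by
    intro x hx
    obtain ⟨C, hC, hxC⟩ := F.exists_mem_part m x
    obtain ⟨v, hv⟩ := hconst C hC fun h => hx (h ▸ hxC)
    obtain ⟨C', hC', hxC'⟩ := F.exists_mem_part (m + 1) x
    have hC'C := subset_of_le m.le_succ hC hC' hxC hxC'
    simp [g, atomAvg_eq_of_forall_eq hC' (fun y hy => hv y (hC'C hy)) hxC',
      atomAvg_eq_of_forall_eq hC hv hxC]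
  have hconst' : ∀ x ∈ D', g x = (⨍ y in D', f y ∂P) - ⨍ y in D, f y ∂P := fun x hx => by
    simp [g, atomAvg_apply hD' hx, atomAvg_apply hD (hD'D hx)]
  have hint : ∫ x in D, g x ∂P = 0 := by
    simp only [g, Pi.sub_apply]
    rw [integral_sub (integrable_atomAvg (F := F)).integrableOn
      (integrable_atomAvg (F := F)).integrableOn,
      setIntegral_atomAvg hf (measurableSet_filt_of_le m.le_succ hD),
      setIntegral_atomAvg_of_mem hD, sub_self]
  have hbound : ∀ x, ‖g x‖ ≤ 2 := fun x => by
    have h1 := abs_atomAvg_le (F := F) (n := m + 1) hf1 x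
    have h0 := abs_atomAvg_le (F := F) (n := m) hf1 x
    simp only [g, Pi.sub_apply, Real.norm_eq_abs]
    exact (abs_sub _ _).trans (by linarith)
  have hg : F.mdiff f m =ᵐ[P] g := (condExp_ae_eq_atomAvg hf).sub (condExp_ae_eq_atomAvg hf)
  rw [eLpNorm_congr_ae hg, eLpNorm_one_eq_lintegral_enorm,
    ← ofReal_integral_norm_eq_lintegral_enorm hgint]
  refine ENNReal.ofReal_le_ofReal ((integral_norm_le_of_setIntegral_eq_zero hgint
    (F.meas _ _ hD') hD'D hzero hconst' hint hbound).trans_eq (by ring))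

end Paper.FilteredAtomic

theorem MeasureTheory.two_mul_measureReal_setOf_eq_one_le {α : Type*} [MeasurableSpace α]
    {μ : Measure α} [IsFiniteMeasure μ] {f : α → ℝ} {A : Set α} (hf : Measurable f)
    (hf1 : ∀ x, |f x| ≤ 1) (hfA : ∀ x ∉ A, f x = 0) (h0 : ∫ x in A, f x ∂μ = 0) :
    2 * μ.real {x | f x = 1} ≤ μ.real A := by
  have hU : MeasurableSet {x | f x = 1} := measurableSet_eq_fun hf measurable_const
  have hUA : {x | f x = 1} ⊆ A := fun x hx => by_contra fun hxA => by simp_all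
  have hint : Integrable f μ := Integrable.of_bound hf.aestronglyMeasurable 1 (ae_of_all _ hf1)
  calc 2 * μ.real {x | f x = 1} = ∫ x in {x | f x = 1}, (1 + f x) ∂μ := by
        rw [setIntegral_congr_fun hU fun x (hx : f x = 1) => (by linarith : 1 + f x = 2),
          setIntegral_const, smul_eq_mul, mul_comm]
    _ ≤ ∫ x in A, (1 + f x) ∂μ :=
        setIntegral_mono_set ((integrable_const 1).add hint).integrableOn
          (ae_of_all _ fun x => show 0 ≤ 1 + f x by linarith [neg_abs_le (f x), hf1 x])
          hUA.eventuallyLE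
    _ = μ.real A := by
        rw [integral_add (integrable_const 1).integrableOn hint.integrableOn, h0, setIntegral_const,
          smul_eq_mul, mul_one, add_zero]

namespace Paper

variable {Ω : Type*} {A S R : Set Ω} {c : ℝ} {ω : Ω}

def protoHaar (A S R : Set Ω) (c : ℝ) : Ω → ℝ :=
  S.indicator 1 + R.indicator (fun _ => c) - (A \ (S ∪ R)).indicator 1

theorem protoHaar_of_mem_left (hSR : Disjoint S R) (hω : ω ∈ S) : protoHaar A S R c ω = 1 := by
  simp [protoHaar, hω, Set.disjoint_left.1 hSR hω]

theorem protoHaar_of_mem_right (hSR : Disjoint S R) (hω : ω ∈ R) : protoHaar A S R c ω = c := by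
  simp [protoHaar, hω, Set.disjoint_right.1 hSR hω]

theorem protoHaar_of_mem_diff (hω : ω ∈ A \ (S ∪ R)) : protoHaar A S R c ω = -1 := by
  simp only [Set.mem_sdiff, Set.mem_union, not_or] at hω
  simp [protoHaar, hω]

theorem protoHaar_of_notMem (hS : S ⊆ A) (hR : R ⊆ A) (hω : ω ∉ A) : protoHaar A S R c ω = 0 := by
  have hωS : ω ∉ S := fun h => hω (hS h)
  have hωR : ω ∉ R := fun h => hω (hR h)
  simp [protoHaar, hω, hωS, hωR]

theorem abs_protoHaar_le (hSR : Disjoint S R) (hc : |c| ≤ 1) (ω : Ω) :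
    |protoHaar A S R c ω| ≤ 1 := by
  by_cases hS : ω ∈ S
  · simp [protoHaar_of_mem_left hSR hS]
  by_cases hR : ω ∈ R
  · rwa [protoHaar_of_mem_right hSR hR]
  by_cases hA : ω ∈ A
  · simp [protoHaar_of_mem_diff ⟨hA, fun h => h.elim hS hR⟩]
  · simp [protoHaar, hS, hR, hA]

theorem measurable_protoHaar {m : MeasurableSpace Ω} (hA : MeasurableSet[m] A)
    (hS : MeasurableSet[m] S) (hR : MeasurableSet[m] R) : Measurable[m] (protoHaar A S R c) :=
  ((measurable_const.indicator hS).add (measurable_const.indicator hR)).sub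
    (measurable_const.indicator (hA.diff (hS.union hR)))

variable [MeasurableSpace Ω] {μ : Measure Ω} [IsFiniteMeasure μ]

theorem integral_protoHaar (hA : MeasurableSet A) (hS : MeasurableSet S) (hR : MeasurableSet R) :
    ∫ x, protoHaar A S R c x ∂μ = μ.real S + c * μ.real R - μ.real (A \ (S ∪ R)) := by
  have hE := hA.diff (hS.union hR)
  simp only [protoHaar, Pi.sub_apply, Pi.add_apply]
  rw [integral_sub (((integrable_const _).indicator hS).add
      ((integrable_const _).indicator hR)) ((integrable_const _).indicator hE),
    integral_add ((integrable_const _).indicator hS) ((integrable_const _).indicator hR)]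
  simp [integral_indicator_one hS, integral_indicator_const _ hR, integral_indicator_one hE,
    mul_comm]

end Paper

theorem Finset.exists_threshold_split {ι M : Type*} [AddCommMonoid M] [LinearOrder M]
    (w : ι → M) {s : Finset ι} (hs : s.Nonempty) {a τ : M} (ha : a ≤ τ)
    (hτ : τ ≤ a + ∑ i ∈ s, w i) :
    ∃ t ⊆ s, ∃ i ∈ s, i ∉ t ∧ a + ∑ j ∈ t, w j ≤ τ ∧ τ ≤ a + ∑ j ∈ t, w j + w i := by
  induction hs using Finset.Nonempty.cons_induction generalizing a with
  | singleton x =>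
    exact ⟨∅, Finset.empty_subset _, x, Finset.mem_singleton_self x, Finset.notMem_empty x,
      by simpa using ha, by simpa using hτ⟩
  | cons x s hx hs ih =>
    by_cases hxτ : τ ≤ a + w x
    · exact ⟨∅, Finset.empty_subset _, x, Finset.mem_cons_self x s, Finset.notMem_empty x,
        by simpa using ha, by simpa using hxτ⟩
    · rw [Finset.sum_cons, ← add_assoc] at hτ
      obtain ⟨t, hts, i, his, hit, h1, h2⟩ := ih (le_of_not_ge hxτ) hτ
      have hxt : x ∉ t := fun h => hx (hts h)
      refine ⟨Finset.cons x t hxt, Finset.cons_subset_cons.2 hts, i, Finset.mem_cons_of_mem his,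
        ?_, ?_, ?_⟩
      · simp only [Finset.mem_cons, not_or]
        exact ⟨fun h => hx (h ▸ his), hit⟩
      · rwa [Finset.sum_cons, ← add_assoc]
      · rwa [Finset.sum_cons, ← add_assoc]

namespace Paper.FilteredAtomic

variable {Ω : Type*} [MeasurableSpace Ω] {P : Measure Ω} [IsFiniteMeasure P]

variable (F : FilteredAtomic Ω P) in
structure GreedyInv (τ : ℝ) (m : ℕ) (D S : Set Ω) : Prop where
  mem_part : D ∈ F.part m
  measurableSet : MeasurableSet[F.filt m] S
  disjoint : Disjoint S D
  le : P.real S ≤ τ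
  le_add : τ ≤ P.real S + P.real D

variable {F : FilteredAtomic Ω P} {τ : ℝ} {m : ℕ} {D S : Set Ω}

theorem GreedyInv.exists_succ (h : F.GreedyInv τ m D S) :
    ∃ D' S', F.GreedyInv τ (m + 1) D' S' ∧ D' ⊆ D ∧ S ⊆ S' ∧ S' ⊆ S ∪ D := by
  classical
  set kids := (F.part (m + 1)).filter (· ⊆ D)
  have hkids : ∀ C ∈ kids, C ∈ F.part (m + 1) ∧ C ⊆ D := fun C hC => Finset.mem_filter.1 hC
  have hkids_disj : (↑kids : Set (Set Ω)).PairwiseDisjoint id :=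
    (F.disj _).subset (Finset.coe_subset.2 (Finset.filter_subset _ _))
  have hsum : P.real D = ∑ C ∈ kids, P.real C := by
    conv_lhs => rw [← biUnion_filter_subset_eq fun C hC => subset_or_disjoint_of_le m.le_succ
      h.mem_part hC]
    exact measureReal_biUnion_finset hkids_disj fun C hC => F.meas _ C (hkids C hC).1
  have hne : kids.Nonempty := Finset.nonempty_of_sum_ne_zero <| by
    rw [← hsum]
    exact (ENNReal.toReal_pos (F.pos m D h.mem_part).ne' (measure_ne_top P D)).ne'
  obtain ⟨t, htk, D', hD'k, hD't, h1, h2⟩ :=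
    kids.exists_threshold_split P.real hne h.le (hsum ▸ h.le_add)
  set U := ⋃ C ∈ t, C
  have hU : U ⊆ D := Set.iUnion₂_subset fun C hC => (hkids C (htk hC)).2
  have hUmeas : MeasurableSet[F.filt (m + 1)] U := Finset.measurableSet_biUnion _ fun C hC =>
    MeasurableSpace.measurableSet_generateFrom (hkids C (htk hC)).1
  have hPU : P.real (S ∪ U) = P.real S + ∑ C ∈ t, P.real C := by
    rw [measureReal_union (h.disjoint.mono_right hU) (F.filt_le _ _ hUmeas) (measure_ne_top P S)
      (measure_ne_top P U)]
    exact congrArg _ (measureReal_biUnion_finset (hkids_disj.subset (Finset.coe_subset.2 htk))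
      fun C hC => F.meas _ C (hkids C (htk hC)).1)
  have hUD' : Disjoint U D' := Set.disjoint_iUnion₂_left.2 fun C hC =>
    disjoint_of_mem_part (hkids C (htk hC)).1 (hkids D' hD'k).1 fun hCD' => hD't (hCD' ▸ hC)
  refine ⟨D', S ∪ U, ⟨(hkids D' hD'k).1, (F.filt_mono m.le_succ _ h.measurableSet).union hUmeas,
    Set.disjoint_union_left.2 ⟨h.disjoint.mono_right (hkids D' hD'k).2, hUD'⟩,
    by rwa [hPU], by rwa [hPU]⟩, (hkids D' hD'k).2, Set.subset_union_left,
    Set.union_subset_union_right S hU⟩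

variable (F) in
structure GreedyChain (A : Set Ω) (ℓ : ℕ) where
  D : ℕ → Set Ω
  S : ℕ → Set Ω
  D_zero : D 0 = A
  S_zero : S 0 = ∅
  inv : ∀ n, F.GreedyInv (P.real A / 2) (ℓ + n) (D n) (S n)
  D_succ_subset : ∀ n, D (n + 1) ⊆ D n
  S_subset_succ : ∀ n, S n ⊆ S (n + 1)
  S_succ_subset : ∀ n, S (n + 1) ⊆ S n ∪ D n

theorem nonempty_greedyChain {A : Set Ω} {ℓ : ℕ} (hA : A ∈ F.part ℓ) :
    Nonempty (F.GreedyChain A ℓ) := by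
  have hbase : F.GreedyInv (P.real A / 2) (ℓ + 0) A ∅ :=
    ⟨hA, (F.filt _).measurableSet_empty, Set.empty_disjoint A,
      by simp only [measureReal_empty]; positivity,
      by simp only [measureReal_empty, zero_add]; linarith [measureReal_nonneg (μ := P) (s := A)]⟩
  choose! nextD nextS hnext using fun (n : ℕ) (D S : Set Ω)
    (h : F.GreedyInv (P.real A / 2) (ℓ + n) D S) => h.exists_succ
  let seq : ℕ → Set Ω × Set Ω := fun n =>
    Nat.rec (A, ∅) (fun n p => (nextD n p.1 p.2, nextS n p.1 p.2)) n
  have hseq : ∀ n, F.GreedyInv (P.real A / 2) (ℓ + n) (seq n).1 (seq n).2 := by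
    intro n
    induction n with
    | zero => exact hbase
    | succ n ih => exact (hnext n _ _ ih).1
  exact ⟨⟨fun n => (seq n).1, fun n => (seq n).2, rfl, rfl, hseq,
    fun n => (hnext n _ _ (hseq n)).2.1, fun n => (hnext n _ _ (hseq n)).2.2.1,
    fun n => (hnext n _ _ (hseq n)).2.2.2⟩⟩

end Paper.FilteredAtomic

namespace Paper.FilteredAtomic.GreedyChain

variable {Ω : Type*} [MeasurableSpace Ω] {P : Measure Ω}
  {F : FilteredAtomic Ω P} {A : Set Ω} {ℓ : ℕ} (G : F.GreedyChain A ℓ) (n : ℕ)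

theorem mem_part : G.D n ∈ F.part (ℓ + n) := (G.inv n).mem_part

theorem mem_part_zero (G : F.GreedyChain A ℓ) : A ∈ F.part ℓ := by
  simpa [G.D_zero] using G.mem_part 0

theorem D_antitone : Antitone G.D := antitone_nat_of_succ_le G.D_succ_subset

theorem S_monotone : Monotone G.S := monotone_nat_of_le_succ G.S_subset_succ

theorem S_subset_S_union_D {i j : ℕ} (h : i ≤ j) : G.S j ⊆ G.S i ∪ G.D i := by
  induction j, h using Nat.le_induction with
  | base => exact Set.subset_union_left
  | succ j hij ih =>
    exact (G.S_succ_subset j).trans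
      (Set.union_subset ih ((G.D_antitone hij).trans Set.subset_union_right))

theorem D_subset : G.D n ⊆ A := (G.D_antitone n.zero_le).trans G.D_zero.le

theorem S_subset : G.S n ⊆ A := by
  simpa [G.S_zero, G.D_zero] using G.S_subset_S_union_D n.zero_le

theorem measurableSet_D : MeasurableSet (G.D n) := F.meas _ _ (G.mem_part n)

theorem measurableSet_S : MeasurableSet (G.S n) := F.filt_le _ _ (G.inv n).measurableSet

/-- The value on `D n` is the one that gives `haar` mean zero. -/
def haar : Ω → ℝ :=
  protoHaar A (G.S n) (G.D n) ((P.real (A \ (G.S n ∪ G.D n)) - P.real (G.S n)) / P.real (G.D n))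

theorem haar_eq_zero_of_notMem {ω : Ω} (hω : ω ∉ A) : G.haar n ω = 0 :=
  protoHaar_of_notMem (G.S_subset n) (G.D_subset n) hω

theorem measurable_haar : Measurable[F.filt (ℓ + n)] (G.haar n) :=
  measurable_protoHaar (measurableSet_filt_of_le (Nat.le_add_right ℓ n) G.mem_part_zero)
    (G.inv n).measurableSet (MeasurableSpace.measurableSet_generateFrom (G.mem_part n))

theorem abs_haar_ne_one_inter_subset : {ω | |G.haar n ω| ≠ 1} ∩ A ⊆ G.D n := by
  rintro ω ⟨hω, hωA⟩
  by_contra hωD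
  by_cases hωS : ω ∈ G.S n
  · exact hω (by simp [haar, protoHaar_of_mem_left (G.inv n).disjoint hωS])
  · exact hω (by simp [haar, protoHaar_of_mem_diff ⟨hωA, fun h => h.elim hωS hωD⟩])

theorem exists_haar_eq_on_atom {i : ℕ} (hi : i ≤ n) {C : Set Ω} (hC : C ∈ F.part (ℓ + i))
    (hCD : C ≠ G.D i) : ∃ v, ∀ x ∈ C, G.haar n x = v := by
  rcases subset_or_disjoint_of_le (Nat.le_add_right ℓ i) G.mem_part_zero hC with hCA | hCA
  · rcases subset_or_disjoint_of_measurableSet (G.inv i).measurableSet hC with hCS | hCS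
    · exact ⟨1, fun x hx =>
        protoHaar_of_mem_left (G.inv n).disjoint (G.S_monotone hi (hCS hx))⟩
    · refine ⟨-1, fun x hx => protoHaar_of_mem_diff ⟨hCA hx, fun hxSD => ?_⟩⟩
      have hxD : x ∉ G.D i :=
        Set.disjoint_left.1 (disjoint_of_mem_part hC (G.mem_part i) hCD) hx
      rcases hxSD with hxS | hxD'
      · exact (G.S_subset_S_union_D hi hxS).elim (Set.disjoint_left.1 hCS hx) hxD
      · exact hxD (G.D_antitone hi hxD')
  · exact ⟨0, fun x hx => G.haar_eq_zero_of_notMem n (Set.disjoint_left.1 hCA hx)⟩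

variable [IsFiniteMeasure P]

theorem measureReal_D_pos : 0 < P.real (G.D n) :=
  ENNReal.toReal_pos (F.pos _ _ (G.mem_part n)).ne' (measure_ne_top P _)

theorem exists_measureReal_D_lt {ε : ℝ} {k : ℕ} (hk : (2 ^ k)⁻¹ < ε)
    (hbig : (1 - ε / 2) * P.real A < P.real (⋃₀ Gk F.eColl k A)) :
    ∃ n, P.real (G.D n) < ε * P.real A := by
  by_contra! hD
  set K := ⋂ n, G.D n
  set W := ⋃₀ Gk F.eColl k A
  have hAatom : A ∈ F.atoms := Set.mem_iUnion.2 ⟨ℓ, G.mem_part_zero⟩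
  have hApos : 0 < P.real A := G.D_zero ▸ G.measureReal_D_pos 0
  have hε : 0 < ε := lt_trans (by positivity) hk
  have hK : ε * P.real A ≤ P.real K := by
    refine (ENNReal.ofReal_le_iff_le_toReal (measure_ne_top P K)).1 ?_
    rw [G.D_antitone.measure_iInter (fun n => (G.measurableSet_D n).nullMeasurableSet)
      ⟨0, measure_ne_top P _⟩]
    exact le_iInf fun n =>
      (ENNReal.ofReal_le_ofReal (hD n)).trans_eq (ofReal_measureReal (measure_ne_top P _))
  have hKW : Disjoint K W := by
    refine Set.disjoint_sUnion_right.2 fun B hB => Set.disjoint_left.2 fun x hxK hxB => ?_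
    have hBatom : B ∈ F.atoms := by
      rcases Gk_subset_insert k hB with rfl | hBe
      exacts [hAatom, hBe.1]
    obtain ⟨L, hBL⟩ := Set.mem_iUnion.1 hBatom
    have hDB : G.D L ⊆ B :=
      subset_of_le (by omega) hBL (G.mem_part L) hxB (Set.mem_iInter.1 hxK L)
    have hB : P.real B ≤ (2 ^ k)⁻¹ * P.real A := by
      rw [le_inv_mul_iff₀ (by positivity)]
      exact two_pow_mul_measureReal_le_of_mem_Gk hAatom hB
    have := mul_lt_mul_of_pos_right hk hApos
    linarith [measureReal_mono (μ := P) hDB, hD L]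
  have hKW_le : P.real K + P.real W ≤ P.real A := by
    rw [← measureReal_union' hKW (MeasurableSet.iInter G.measurableSet_D)]
    exact measureReal_mono (Set.union_subset ((Set.iInter_subset _ 0).trans (G.D_subset 0))
      (Set.sUnion_subset fun B hB => subset_of_mem_Gk hB))
  nlinarith [mul_pos hε hApos]

theorem measureReal_diff_S_union_D :
    P.real (A \ (G.S n ∪ G.D n)) = P.real A - P.real (G.S n) - P.real (G.D n) := by
  rw [measureReal_sdiff (Set.union_subset (G.S_subset n) (G.D_subset n))
    ((G.measurableSet_S n).union (G.measurableSet_D n)),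
    measureReal_union (G.inv n).disjoint (G.measurableSet_D n)]
  ring

theorem abs_haar_le (ω : Ω) : |G.haar n ω| ≤ 1 := by
  refine abs_protoHaar_le (G.inv n).disjoint ?_ ω
  rw [abs_div, abs_of_pos (G.measureReal_D_pos n), div_le_one (G.measureReal_D_pos n), abs_le,
    measureReal_diff_S_union_D]
  have := (G.inv n).le
  have := (G.inv n).le_add
  constructor <;> linarith

theorem integrable_haar : Integrable (G.haar n) P :=
  Integrable.of_bound ((G.measurable_haar n).mono (F.filt_le _) le_rfl).aestronglyMeasurable 1
    (ae_of_all _ (G.abs_haar_le n))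

theorem integral_haar : ∫ ω, G.haar n ω ∂P = 0 := by
  rw [haar, integral_protoHaar (F.meas _ _ G.mem_part_zero) (G.measurableSet_S n)
    (G.measurableSet_D n), div_mul_cancel₀ _ (G.measureReal_D_pos n).ne']
  ring

theorem setIntegral_haar : ∫ ω in A, G.haar n ω ∂P = 0 := by
  rw [setIntegral_eq_integral_of_forall_compl_eq_zero fun ω hω => G.haar_eq_zero_of_notMem n hω,
    G.integral_haar n]

theorem measureReal_haar_eq_bounds {ξ : ℝ} (hξ : ξ = -1 ∨ ξ = 1) :
    P.real A / 2 - P.real (G.D n) ≤ P.real {ω | G.haar n ω = ξ} ∧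
      2 * P.real {ω | G.haar n ω = ξ} ≤ P.real A := by
  have := (G.inv n).le
  have := (G.inv n).le_add
  rcases hξ with rfl | rfl
  · refine ⟨?_, ?_⟩
    · have hsub : A \ (G.S n ∪ G.D n) ⊆ {ω | G.haar n ω = -1} := fun ω hω =>
        protoHaar_of_mem_diff hω
      linarith [measureReal_mono (μ := P) hsub, G.measureReal_diff_S_union_D n]
    · have := two_mul_measureReal_setOf_eq_one_le (μ := P) (A := A)
        ((G.measurable_haar n).mono (F.filt_le _) le_rfl).neg
        (fun ω => by simpa using G.abs_haar_le n ω)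
        (fun ω hω => by simp [G.haar_eq_zero_of_notMem n hω])
        (by simp only [Pi.neg_apply]; rw [integral_neg, G.setIntegral_haar n, neg_zero])
      simpa [neg_eq_iff_eq_neg] using this
  · refine ⟨?_, two_mul_measureReal_setOf_eq_one_le
      ((G.measurable_haar n).mono (F.filt_le _) le_rfl) (G.abs_haar_le n)
      (fun ω hω => G.haar_eq_zero_of_notMem n hω) (G.setIntegral_haar n)⟩
    have hsub : G.S n ⊆ {ω | G.haar n ω = 1} := fun ω hω =>
      protoHaar_of_mem_left (G.inv n).disjoint hω
    linarith [measureReal_mono (μ := P) hsub]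

theorem tsum_eLpNorm_mdiff_haar_le :
    ∑' m, eLpNorm (F.mdiff (G.haar n) m) 1 P ≤ 4 * P A := by
  have hint := G.integrable_haar n
  have hlow : ∀ m, m < ℓ → eLpNorm (F.mdiff (G.haar n) m) 1 P = 0 := fun m hm => by
    have hzero : ∀ m' ≤ ℓ, F.atomAvg m' (G.haar n) = 0 := fun m' hm' =>
      funext (atomAvg_eq_zero_of_le hm' G.mem_part_zero
        (fun x hx => G.haar_eq_zero_of_notMem n hx) (G.integral_haar n))
    have hdiff : F.mdiff (G.haar n) m =ᵐ[P] 0 :=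
      ((condExp_ae_eq_atomAvg hint).sub (condExp_ae_eq_atomAvg hint)).trans
        (by rw [hzero _ hm, hzero _ hm.le, sub_zero])
    rw [eLpNorm_congr_ae hdiff, eLpNorm_zero]
  have hhigh : ∀ m, ℓ + n ≤ m → eLpNorm (F.mdiff (G.haar n) m) 1 P = 0 := fun m hm => by
    have hmeas : ∀ m', ℓ + n ≤ m' → P[G.haar n|F.filt m'] = G.haar n := fun m' hm' =>
      condExp_of_stronglyMeasurable (F.filt_le m')
        ((G.measurable_haar n).mono (F.filt_mono hm') le_rfl).stronglyMeasurable hint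
    simp [mdiff, hmeas m hm, hmeas (m + 1) (by omega)]
  have hmid : ∀ i < n, eLpNorm (F.mdiff (G.haar n) (ℓ + i)) 1 P ≤
      ENNReal.ofReal (4 * (P.real (G.D i) - P.real (G.D (i + 1)))) := fun i hi => by
    rw [← measureReal_sdiff (G.D_succ_subset i) (G.measurableSet_D (i + 1))]
    exact eLpNorm_mdiff_le (G.mem_part i) (G.mem_part (i + 1)) (G.D_succ_subset i) hint
      (G.abs_haar_le n) fun C hC hCD => G.exists_haar_eq_on_atom n hi.le hC hCD
  calc ∑' m, eLpNorm (F.mdiff (G.haar n) m) 1 P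
      = ∑ i ∈ Finset.range n, eLpNorm (F.mdiff (G.haar n) (ℓ + i)) 1 P := by
        rw [tsum_eq_sum (s := Finset.Ico ℓ (ℓ + n)) fun m hm => ?_, Finset.sum_Ico_eq_sum_range,
          Nat.add_sub_cancel_left]
        rw [Finset.mem_Ico, not_and_or, not_le, not_lt] at hm
        exact hm.elim (hlow m) (hhigh m)
    _ ≤ ∑ i ∈ Finset.range n, ENNReal.ofReal (4 * (P.real (G.D i) - P.real (G.D (i + 1)))) :=
        Finset.sum_le_sum fun i hi => hmid i (Finset.mem_range.1 hi)
    _ = ENNReal.ofReal (4 * (P.real (G.D 0) - P.real (G.D n))) := by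
        rw [← ENNReal.ofReal_sum_of_nonneg fun i _ => by
          linarith [measureReal_mono (μ := P) (G.D_succ_subset i)], ← Finset.mul_sum,
          Finset.sum_range_sub']
    _ ≤ ENNReal.ofReal (4 * P.real A) := by
        rw [G.D_zero]
        gcongr
        linarith [measureReal_nonneg (μ := P) (s := G.D n)]
    _ = 4 * P A := by
        rw [ENNReal.ofReal_mul (by norm_num), ofReal_measureReal (measure_ne_top P A),
          ENNReal.ofReal_ofNat]

end Paper.FilteredAtomic.GreedyChain

open MeasureTheory ENNReal in
theorem statement_3_general {Ω : Type*} [m0 : MeasurableSpace Ω] (P : Measure Ω)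
    [IsProbabilityMeasure P] (F : Paper.FilteredAtomic Ω P)
    (ε : ℝ) (hε0 : 0 < ε)
    (k : ℕ) (hk : -Real.logb 2 ε < (k : ℝ))
    (A : Set Ω) (hA : A ∈ F.atoms)
    (hbig : ENNReal.ofReal (1 - ε / 2) * P A < P (⋃₀ Paper.Gk F.eColl k A)) :
    ∃ H : Ω → ℝ,
      -- (H1)
      (∀ᵐ ω ∂P, |H ω| ≤ 1) ∧
      -- (H2)
      Function.support H ⊆ A ∧
      -- (H3)
      (∃ t : ℕ, Measurable[F.filt t] H) ∧
      -- (H4)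
      (∫ ω in A, H ω ∂P) = 0 ∧
      -- (H5)
      P ({ω | |H ω| ≠ 1} ∩ A) ≤ ENNReal.ofReal ε * P A ∧
      -- (H6)
      (∀ ξ : ℝ, ξ = -1 ∨ ξ = 1 →
        ENNReal.ofReal (1 / 2 - ε) * P A ≤ P {ω | H ω = ξ} ∧
          P {ω | H ω = ξ} ≤ 2⁻¹ * P A) ∧
      -- (H7)
      ∑' n : ℕ, eLpNorm (F.mdiff H n) 1 P ≤ 6 * P A := by
  have hofReal : ∀ (x : ℝ) (s : Set Ω), ENNReal.ofReal x * P s = ENNReal.ofReal (x * P.real s) :=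
    fun x s => by rw [ENNReal.ofReal_mul' measureReal_nonneg, ofReal_measureReal]
  have hk' : ((2 : ℝ) ^ k)⁻¹ < ε := by
    have := (Real.lt_logb_iff_rpow_lt one_lt_two hε0).1 (neg_lt.1 hk)
    rwa [Real.rpow_neg zero_le_two, Real.rpow_natCast] at this
  rw [hofReal, ← ofReal_measureReal, ENNReal.ofReal_lt_ofReal_iff'] at hbig
  obtain ⟨ℓ, hAℓ⟩ := Set.mem_iUnion.1 hA
  obtain ⟨G⟩ := Paper.FilteredAtomic.nonempty_greedyChain hAℓ
  obtain ⟨n, hn⟩ := G.exists_measureReal_D_lt hk' hbig.1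
  refine ⟨G.haar n, ae_of_all _ (G.abs_haar_le n),
    fun ω hω => by_contra fun hωA => hω (G.haar_eq_zero_of_notMem n hωA),
    ⟨ℓ + n, G.measurable_haar n⟩, G.setIntegral_haar n, ?_, fun ξ hξ => ?_,
    (G.tsum_eLpNorm_mdiff_haar_le n).trans (by gcongr; norm_num)⟩
  · refine (measure_mono (G.abs_haar_ne_one_inter_subset n)).trans ?_
    rw [hofReal, ← ofReal_measureReal]
    exact ENNReal.ofReal_le_ofReal hn.le
  · obtain ⟨hlow, hup⟩ := G.measureReal_haar_eq_bounds n hξ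
    rw [hofReal, ← ofReal_measureReal, ← ENNReal.ofReal_ofNat 2,
      ← ENNReal.ofReal_inv_of_pos two_pos, hofReal]
    constructor <;> apply ENNReal.ofReal_le_ofReal <;> linarith

open MeasureTheory ENNReal in
/-- Lemma on proto-Haar functions `H_A`. -/
theorem statement_3 {Ω : Type*} [m0 : MeasurableSpace Ω] (P : Measure Ω)
    [IsProbabilityMeasure P] (F : Paper.FilteredAtomic Ω P)
    (ε : ℝ) (hε0 : 0 < ε) (hε : ε < 1 / 2)
    (k : ℕ) (hk : -Real.logb 2 ε < (k : ℝ))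
    (A : Set Ω) (hA : A ∈ F.atoms)
    (hbig : ENNReal.ofReal (1 - ε / 2) * P A < P (⋃₀ Paper.Gk F.eColl k A)) :
    ∃ H : Ω → ℝ,
      -- (H1)
      (∀ᵐ ω ∂P, |H ω| ≤ 1) ∧
      -- (H2)
      Function.support H ⊆ A ∧
      -- (H3)
      (∃ t : ℕ, Measurable[F.filt t] H) ∧
      -- (H4)
      (∫ ω in A, H ω ∂P) = 0 ∧
      -- (H5)
      P ({ω | |H ω| ≠ 1} ∩ A) ≤ ENNReal.ofReal ε * P A ∧
      -- (H6)
      (∀ ξ : ℝ, ξ = -1 ∨ ξ = 1 →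
        ENNReal.ofReal (1 / 2 - ε) * P A ≤ P {ω | H ω = ξ} ∧
          P {ω | H ω = ξ} ≤ 2⁻¹ * P A) ∧
      -- (H7)
      ∑' n : ℕ, eLpNorm (F.mdiff H n) 1 P ≤ 6 * P A :=
  statement_3_general (m0 := m0) P F ε hε0 k hk A hA hbig
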